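/- Let N, L be positive integers, u_1,…,u_L ∈ ℂ^N nonzero vectors, y_1,…,y_L ≥ 0, γ > 0, μ ≥ 0. Then there exists a constant C ≥ 0 such that for every N×N complex Hermitian positive semidefinite matrix Q and every N×N complex Hermitian matrix Δ, the function t ↦ J_μ(Q + tΔ) is twice differentiable at t = 0 and its second derivative at t = 0 is at most C·‖Δ‖_F². -/

import Mathlib

/-!
Along the line `t ↦ Q + tΔ` every `λ_ℓ` is affine in `t` with slope `b_ℓ = Re u_ℓ* Δ u_ℓ`, and the
trace term is linear, so the second derivative at `0` is `Σ_ℓ b_ℓ² (-λ_ℓ⁻² + 2 y_ℓ λ_ℓ⁻³)`.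
Dropping the negative part, positive semidefiniteness gives `λ_ℓ ≥ γ⁻¹‖u_ℓ‖²` and Cauchy–Schwarz
gives `|b_ℓ| ≤ ‖u_ℓ‖² ‖Δ‖_F`, so `C = Σ_ℓ 2 y_ℓ γ³ / ‖u_ℓ‖²` works.
-/

open Matrix BigOperators
open scoped ComplexOrder

noncomputable section

namespace MmW

variable {N L : ℕ}

/-- Squared Euclidean norm of a complex vector. -/
def nsq (v : Fin N → ℂ) : ℝ := ∑ i, Complex.normSq (v i)

/-- The rank-one matrix `v v*`. -/
def outer (v : Fin N → ℂ) : Matrix (Fin N) (Fin N) ℂ := Matrix.vecMulVec v (star v)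

/-- `λ_ℓ(Q) = u_ℓ* (Q + γ⁻¹ I) u_ℓ` (real part; it is real for Hermitian `Q`). -/
def lam (u : Fin L → Fin N → ℂ) (γ : ℝ) (Q : Matrix (Fin N) (Fin N) ℂ) (ℓ : Fin L) : ℝ :=
  (star (u ℓ) ⬝ᵥ ((Q + ((γ : ℂ))⁻¹ • (1 : Matrix (Fin N) (Fin N) ℂ)) *ᵥ u ℓ)).re

/-- The regularized ML objective `J_μ(Q) = Σ_ℓ [log λ_ℓ(Q) + y_ℓ/λ_ℓ(Q)] + μ·Tr(Q)`. -/
def Jmu (u : Fin L → Fin N → ℂ) (y : Fin L → ℝ) (γ μ : ℝ)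
    (Q : Matrix (Fin N) (Fin N) ℂ) : ℝ :=
  (∑ ℓ, (Real.log (lam u γ Q ℓ) + y ℓ / lam u γ Q ℓ)) + μ * Q.trace.re

/-- The `(L+1)×(L+1)` real matrix `A`, indexed by `0,…,L`:
`A_{00} = N`, `A_{0j} = ‖u_j‖²`, `A_{ℓ0} = ‖u_ℓ‖²`, `A_{ℓj} = |u_ℓ* u_j|²`. -/
def Amat (N : ℕ) (u : Fin L → Fin N → ℂ) : Matrix (Fin (L+1)) (Fin (L+1)) ℝ :=
  fun i j =>
    Fin.cases
      (Fin.cases (N : ℝ) (fun j' => nsq (u j')) j)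
      (fun i' => Fin.cases (nsq (u i')) (fun j' => Complex.normSq (star (u i') ⬝ᵥ u j')) j)
      i

/-- The separable objective
`f(z) = μ z_0 + Σ_ℓ [log(z_ℓ + γ⁻¹‖u_ℓ‖²) + y_ℓ/(z_ℓ + γ⁻¹‖u_ℓ‖²)]`. -/
def fobj (u : Fin L → Fin N → ℂ) (y : Fin L → ℝ) (γ μ : ℝ) (z : Fin (L+1) → ℝ) : ℝ :=
  μ * z 0 + ∑ ℓ, (Real.log (z ℓ.succ + γ⁻¹ * nsq (u ℓ)) + y ℓ / (z ℓ.succ + γ⁻¹ * nsq (u ℓ)))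

/-- The matrix `Q = Σ_ℓ q_ℓ u_ℓ u_ℓ* + q_0 I` built from `q ∈ ℝ^{L+1}`. -/
def Qof (u : Fin L → Fin N → ℂ) (q : Fin (L+1) → ℝ) : Matrix (Fin N) (Fin N) ℂ :=
  (∑ ℓ, ((q ℓ.succ : ℝ) : ℂ) • outer (u ℓ)) + ((q 0 : ℝ) : ℂ) • 1

/-- Frobenius norm `‖M‖_F = (Tr(M*M))^{1/2}`. -/
def frob (M : Matrix (Fin N) (Fin N) ℂ) : ℝ := Real.sqrt ((Mᴴ * M).trace.re)

/-- The gradient matrix `S(Q) = Σ_ℓ [1/λ_ℓ(Q) − y_ℓ/λ_ℓ(Q)²] u_ℓ u_ℓ* + μ I`. -/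
def Smat (u : Fin L → Fin N → ℂ) (y : Fin L → ℝ) (γ μ : ℝ)
    (Q : Matrix (Fin N) (Fin N) ℂ) : Matrix (Fin N) (Fin N) ℂ :=
  (∑ ℓ, (((lam u γ Q ℓ)⁻¹ - y ℓ / (lam u γ Q ℓ) ^ 2 : ℝ) : ℂ) • outer (u ℓ))
    + ((μ : ℝ) : ℂ) • 1

/-- The gradient `∇f(z)`: component `0` is `μ`, component `ℓ ≥ 1` is
`1/(z_ℓ + γ⁻¹‖u_ℓ‖²) − y_ℓ/(z_ℓ + γ⁻¹‖u_ℓ‖²)²`. -/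
def gradf (u : Fin L → Fin N → ℂ) (y : Fin L → ℝ) (γ μ : ℝ) (z : Fin (L+1) → ℝ) :
    Fin (L+1) → ℝ :=
  Fin.cases μ
    (fun ℓ => (z ℓ.succ + γ⁻¹ * nsq (u ℓ))⁻¹ - y ℓ / (z ℓ.succ + γ⁻¹ * nsq (u ℓ)) ^ 2)

open Filter Topology
open scoped Matrix.Norms.Frobenius

lemma nsq_eq_norm_sq (v : Fin N → ℂ) : nsq v = ‖WithLp.toLp 2 v‖ ^ 2 := by
  simp [nsq, EuclideanSpace.norm_sq_eq, Complex.normSq_eq_norm_sq]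

lemma nsq_pos {v : Fin N → ℂ} (hv : v ≠ 0) : 0 < nsq v := by
  rw [nsq_eq_norm_sq]
  exact pow_pos (norm_pos_iff.2 (by simpa using hv)) 2

lemma frob_eq_norm (M : Matrix (Fin N) (Fin N) ℂ) : frob M = ‖M‖ := by
  rw [frob, Matrix.frobenius_norm_def, ← Real.sqrt_eq_rpow]
  congr 1
  simp [Matrix.trace, Matrix.mul_apply, Complex.re_sum, ← Complex.normSq_eq_conj_mul_self,
    Complex.normSq_eq_norm_sq, -Complex.ofReal_pow]
  exact Finset.sum_comm

lemma norm_toLp_mulVec_le {𝕜 m n : Type*} [RCLike 𝕜] [Fintype m] [Fintype n]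
    (M : Matrix m n 𝕜) (v : n → 𝕜) : ‖WithLp.toLp 2 (M *ᵥ v)‖ ≤ ‖M‖ * ‖WithLp.toLp 2 v‖ := by
  rw [← Matrix.frobenius_norm_replicateCol (ι := Unit),
    ← Matrix.frobenius_norm_replicateCol (ι := Unit), Matrix.replicateCol_mulVec]
  exact Matrix.frobenius_norm_mul _ _

lemma norm_star_dotProduct_mulVec_le {𝕜 n : Type*} [RCLike 𝕜] [Fintype n] (M : Matrix n n 𝕜)
    (v : n → 𝕜) :
    ‖star v ⬝ᵥ M *ᵥ v‖ ≤ ‖M‖ * ‖WithLp.toLp 2 v‖ ^ 2 :=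
  calc ‖star v ⬝ᵥ M *ᵥ v‖ = ‖inner 𝕜 (WithLp.toLp 2 v) (WithLp.toLp 2 (M *ᵥ v))‖ := by
        rw [EuclideanSpace.inner_toLp_toLp, dotProduct_comm]
    _ ≤ ‖WithLp.toLp 2 v‖ * ‖WithLp.toLp 2 (M *ᵥ v)‖ := norm_inner_le_norm _ _
    _ ≤ ‖WithLp.toLp 2 v‖ * (‖M‖ * ‖WithLp.toLp 2 v‖) := by gcongr; exact norm_toLp_mulVec_le M v
    _ = ‖M‖ * ‖WithLp.toLp 2 v‖ ^ 2 := by ring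

lemma sq_re_star_dotProduct_mulVec_le (M : Matrix (Fin N) (Fin N) ℂ) (v : Fin N → ℂ) :
    (star v ⬝ᵥ M *ᵥ v).re ^ 2 ≤ nsq v ^ 2 * frob M ^ 2 := by
  rw [← mul_pow, ← sq_abs, nsq_eq_norm_sq, frob_eq_norm, mul_comm]
  gcongr
  exact (Complex.abs_re_le_norm _).trans (norm_star_dotProduct_mulVec_le M v)

lemma lam_eq (u : Fin L → Fin N → ℂ) (γ : ℝ) (Q : Matrix (Fin N) (Fin N) ℂ) (ℓ : Fin L) :
    lam u γ Q ℓ = (star (u ℓ) ⬝ᵥ Q *ᵥ u ℓ).re + γ⁻¹ * nsq (u ℓ) := by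
  have hnsq : star (u ℓ) ⬝ᵥ u ℓ = (nsq (u ℓ) : ℂ) := by
    simp [nsq, dotProduct, Complex.normSq_eq_conj_mul_self]
  simp [lam, add_mulVec, dotProduct_add, smul_mulVec, dotProduct_smul, hnsq, ← Complex.ofReal_inv]

lemma le_lam_of_posSemidef {u : Fin L → Fin N → ℂ} {γ : ℝ} {Q : Matrix (Fin N) (Fin N) ℂ}
    (hQ : Q.PosSemidef) (ℓ : Fin L) : γ⁻¹ * nsq (u ℓ) ≤ lam u γ Q ℓ := by
  rw [lam_eq]
  have := Complex.nonneg_iff.1 (hQ.dotProduct_mulVec_nonneg (u ℓ))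
  linarith [this.1]

lemma lam_add_smul (u : Fin L → Fin N → ℂ) (γ : ℝ) (Q Δ : Matrix (Fin N) (Fin N) ℂ)
    (t : ℝ) (ℓ : Fin L) :
    lam u γ (Q + t • Δ) ℓ = lam u γ Q ℓ + t * (star (u ℓ) ⬝ᵥ Δ *ᵥ u ℓ).re := by
  simp only [lam, add_mulVec, smul_mulVec, dotProduct_add, dotProduct_smul, Complex.add_re,
    Complex.real_smul, Complex.re_ofReal_mul]
  ring

lemma hasDerivAt_log_add_div (c : ℝ) {x : ℝ} (hx : x ≠ 0) :
    HasDerivAt (fun x => Real.log x + c / x) (x⁻¹ - c / x ^ 2) x := by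
  have h := (Real.hasDerivAt_log hx).add ((hasDerivAt_const x c).div (hasDerivAt_id x) hx)
  exact h.congr_deriv (by rw [id]; ring)

lemma hasDerivAt_inv_sub_div_sq (c : ℝ) {x : ℝ} (hx : x ≠ 0) :
    HasDerivAt (fun x => x⁻¹ - c / x ^ 2) (-(x ^ 2)⁻¹ + 2 * c / x ^ 3) x := by
  have h := (hasDerivAt_inv hx).sub
    ((hasDerivAt_const x c).div (hasDerivAt_pow 2 x) (pow_ne_zero 2 hx))
  exact h.congr_deriv (by field_simp; ring)

lemma hasDerivAt_sum_comp_affine {ι : Type*} [Fintype ι] {g g' : ι → ℝ → ℝ} (a b : ι → ℝ)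
    {t : ℝ} (hg : ∀ i, HasDerivAt (g i) (g' i (a i + t * b i)) (a i + t * b i)) :
    HasDerivAt (fun s => ∑ i, g i (a i + s * b i)) (∑ i, g' i (a i + t * b i) * b i) t :=
  HasDerivAt.fun_sum fun i _ => (hg i).comp t
    (((hasDerivAt_id t).mul_const (b i)).const_add (a i) |>.congr_deriv (one_mul _))

lemma hasDerivAt_deriv_of_eventually {𝕜 F : Type*} [NontriviallyNormedField 𝕜]
    [NormedAddCommGroup F] [NormedSpace 𝕜 F] {f f' : 𝕜 → F} {x : 𝕜} {s : F}
    (hf : ∀ᶠ y in 𝓝 x, HasDerivAt f (f' y) y) (hf' : HasDerivAt f' s x) :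
    HasDerivAt (deriv f) s x :=
  hf'.congr_of_eventuallyEq (hf.mono fun _ hy => hy.deriv)

lemma Jmu_add_smul (u : Fin L → Fin N → ℂ) (y : Fin L → ℝ) (γ μ : ℝ)
    (Q Δ : Matrix (Fin N) (Fin N) ℂ) (t : ℝ) :
    Jmu u y γ μ (Q + t • Δ) =
      (∑ ℓ, (Real.log (lam u γ Q ℓ + t * (star (u ℓ) ⬝ᵥ Δ *ᵥ u ℓ).re)
        + y ℓ / (lam u γ Q ℓ + t * (star (u ℓ) ⬝ᵥ Δ *ᵥ u ℓ).re)))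
      + μ * (Q.trace.re + t * Δ.trace.re) := by
  simp [Jmu, lam_add_smul, Matrix.trace_add, Matrix.trace_smul]

lemma secondDeriv_summand_le {u : Fin L → Fin N → ℂ} {y : Fin L → ℝ} {γ : ℝ}
    {Q : Matrix (Fin N) (Fin N) ℂ} {ℓ : Fin L} (hu : u ℓ ≠ 0) (hy : 0 ≤ y ℓ) (hγ : 0 < γ)
    (hQ : Q.PosSemidef) (Δ : Matrix (Fin N) (Fin N) ℂ) :
    (-(lam u γ Q ℓ ^ 2)⁻¹ + 2 * y ℓ / lam u γ Q ℓ ^ 3) * (star (u ℓ) ⬝ᵥ Δ *ᵥ u ℓ).re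
        * (star (u ℓ) ⬝ᵥ Δ *ᵥ u ℓ).re
      ≤ 2 * y ℓ * γ ^ 3 / nsq (u ℓ) * frob Δ ^ 2 := by
  set x := lam u γ Q ℓ
  set b := (star (u ℓ) ⬝ᵥ Δ *ᵥ u ℓ).re
  have hn := nsq_pos hu
  have hm : 0 < γ⁻¹ * nsq (u ℓ) := by positivity
  have hx : γ⁻¹ * nsq (u ℓ) ≤ x := le_lam_of_posSemidef hQ ℓ
  calc (-(x ^ 2)⁻¹ + 2 * y ℓ / x ^ 3) * b * b ≤ 2 * y ℓ / (γ⁻¹ * nsq (u ℓ)) ^ 3 * b ^ 2 := by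
        rw [mul_assoc, ← sq]
        gcongr
        calc -(x ^ 2)⁻¹ + 2 * y ℓ / x ^ 3 ≤ 2 * y ℓ / x ^ 3 := by
              linarith [inv_pos.2 (pow_pos (hm.trans_le hx) 2)]
          _ ≤ 2 * y ℓ / (γ⁻¹ * nsq (u ℓ)) ^ 3 := by gcongr
    _ ≤ 2 * y ℓ / (γ⁻¹ * nsq (u ℓ)) ^ 3 * (nsq (u ℓ) ^ 2 * frob Δ ^ 2) := by
        gcongr
        exact sq_re_star_dotProduct_mulVec_le Δ (u ℓ)
    _ = 2 * y ℓ * γ ^ 3 / nsq (u ℓ) * frob Δ ^ 2 := by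
        field_simp

theorem stmt8_general (N L : ℕ)
    (u : Fin L → Fin N → ℂ) (hu : ∀ ℓ, u ℓ ≠ 0)
    (y : Fin L → ℝ) (hy : ∀ ℓ, 0 ≤ y ℓ)
    (γ : ℝ) (hγ : 0 < γ) (μ : ℝ) :
    ∃ C : ℝ, 0 ≤ C ∧
      ∀ (Q Δ : Matrix (Fin N) (Fin N) ℂ), Q.PosSemidef → Δ.IsHermitian →
        DifferentiableAt ℝ (fun t : ℝ => Jmu u y γ μ (Q + t • Δ)) 0 ∧
        DifferentiableAt ℝ (deriv (fun t : ℝ => Jmu u y γ μ (Q + t • Δ))) 0 ∧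
        deriv (deriv (fun t : ℝ => Jmu u y γ μ (Q + t • Δ))) 0 ≤ C * (frob Δ) ^ 2 := by
  refine ⟨∑ ℓ, 2 * y ℓ * γ ^ 3 / nsq (u ℓ),
    Finset.sum_nonneg fun ℓ _ => by have := hy ℓ; have := nsq_pos (hu ℓ); positivity,
    fun Q Δ hQ _ => ?_⟩
  set a := fun ℓ => lam u γ Q ℓ
  set b := fun ℓ => (star (u ℓ) ⬝ᵥ Δ *ᵥ u ℓ).re
  have ha : ∀ ℓ, a ℓ ≠ 0 := fun ℓ =>
    ((mul_pos (inv_pos.2 hγ) (nsq_pos (hu ℓ))).trans_le (le_lam_of_posSemidef hQ ℓ)).ne'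
  have hline : ∀ᶠ t in 𝓝 (0 : ℝ), ∀ ℓ, a ℓ + t * b ℓ ≠ 0 :=
    eventually_all.2 fun ℓ => (by fun_prop : Continuous fun t => a ℓ + t * b ℓ).continuousAt
      |>.eventually_ne (by simpa using ha ℓ)
  have hderiv : ∀ᶠ t in 𝓝 (0 : ℝ), HasDerivAt (fun t : ℝ => Jmu u y γ μ (Q + t • Δ))
      ((∑ ℓ, ((a ℓ + t * b ℓ)⁻¹ - y ℓ / (a ℓ + t * b ℓ) ^ 2) * b ℓ) + μ * Δ.trace.re) t := by
    refine hline.mono fun t ht => ?_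
    simp only [Jmu_add_smul]
    refine (hasDerivAt_sum_comp_affine (g := fun ℓ x => Real.log x + y ℓ / x)
      (g' := fun ℓ x => x⁻¹ - y ℓ / x ^ 2) a b fun ℓ => hasDerivAt_log_add_div (y ℓ) (ht ℓ)).add ?_
    simpa using ((hasDerivAt_id t).mul_const Δ.trace.re |>.const_add Q.trace.re).const_mul μ
  have hderiv2 := hasDerivAt_deriv_of_eventually hderiv
    (((hasDerivAt_sum_comp_affine (g := fun ℓ x => (x⁻¹ - y ℓ / x ^ 2) * b ℓ)
      (g' := fun ℓ x => (-(x ^ 2)⁻¹ + 2 * y ℓ / x ^ 3) * b ℓ) a b fun ℓ =>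
      (hasDerivAt_inv_sub_div_sq (y ℓ) (by simpa using ha ℓ)).mul_const (b ℓ))).add_const _)
  refine ⟨hderiv.self_of_nhds.differentiableAt, hderiv2.differentiableAt, ?_⟩
  rw [hderiv2.deriv, Finset.sum_mul]
  exact Finset.sum_le_sum fun ℓ _ => by
    simpa using secondDeriv_summand_le (hu ℓ) (hy ℓ) hγ hQ Δ

/-- there is a constant `C ≥ 0` such that for every Hermitian PSD `Q`
and every Hermitian `Δ`, the function `t ↦ J_μ(Q + tΔ)` is twice differentiable at
`t = 0` with second derivative at most `C·‖Δ‖_F²`. -/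
theorem stmt8 (N L : ℕ) (hN : 0 < N) (hL : 0 < L)
    (u : Fin L → Fin N → ℂ) (hu : ∀ ℓ, u ℓ ≠ 0)
    (y : Fin L → ℝ) (hy : ∀ ℓ, 0 ≤ y ℓ)
    (γ : ℝ) (hγ : 0 < γ) (μ : ℝ) (hμ : 0 ≤ μ) :
    ∃ C : ℝ, 0 ≤ C ∧
      ∀ (Q Δ : Matrix (Fin N) (Fin N) ℂ), Q.PosSemidef → Δ.IsHermitian →
        DifferentiableAt ℝ (fun t : ℝ => Jmu u y γ μ (Q + t • Δ)) 0 ∧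
        DifferentiableAt ℝ (deriv (fun t : ℝ => Jmu u y γ μ (Q + t • Δ))) 0 ∧
        deriv (deriv (fun t : ℝ => Jmu u y γ μ (Q + t • Δ))) 0 ≤ C * (frob Δ) ^ 2 :=
  stmt8_general N L u hu y hy γ hγ μ

end MmW
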